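/- If V is a commutative semigroup variety with V ≠ COM, then V = G ∨ C_m ∨ N for some Abelian periodic group variety G, some m ≥ 0, and some nil-variety N. -/

import Mathlib

/-!
Formalization framework: semigroup varieties as Galois-closed equational theories
over the free semigroup on countably many letters.  A variety is represented by
its equational theory; the order `V ≤ W` ("V is a subvariety of W") is reverse
inclusion of theories.  `Com` is the lattice of commutative semigroup varieties,
realized as the subtype of varieties whose theory contains the commutative law.
-/

open FreeSemigroup

/-- Words: elements of the free semigroup over a countably infinite alphabet. -/
abbrev Word : Type := FreeSemigroup ℕ

/-- A semigroup identity `u = v`. -/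
abbrev SgId : Type := Word × Word

/-- `spow a n = a ^ (n + 1)` in any (multiplicative) semigroup. -/
def spow {M : Type*} [Mul M] (a : M) : ℕ → M
  | 0 => a
  | n + 1 => a * spow a n

/-- A semigroup `S` satisfies the identity `e.1 = e.2`. -/
def SatS (S : Type) [Semigroup S] (e : SgId) : Prop :=
  ∀ σ : ℕ → S, FreeSemigroup.lift σ e.1 = FreeSemigroup.lift σ e.2

/-- `S` is a model of the set of identities `E`. -/
def Models (S : Type) [Semigroup S] (E : Set SgId) : Prop :=
  ∀ e ∈ E, SatS S e

/-- The equational theory generated by `E`: all identities holding in every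
model of `E` (by Birkhoff's theorem this is exactly deductive closure). -/
def eqTh (E : Set SgId) : Set SgId :=
  { e | ∀ (S : Type) [Semigroup S], Models S E → SatS S e }

theorem subset_eqTh (E : Set SgId) : E ⊆ eqTh E := by
  intro e he S _ hS
  exact hS e he

theorem eqTh_mono {E F : Set SgId} (h : E ⊆ F) : eqTh E ⊆ eqTh F := by
  intro e he S _ hS
  exact he S fun e' he' => hS e' (h he')

theorem eqTh_idem (E : Set SgId) : eqTh (eqTh E) = eqTh E := by
  refine Set.Subset.antisymm ?_ (subset_eqTh _)
  intro e he S _ hS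
  exact he S fun e' he' => he' S hS

/-- A semigroup variety, given by its (Galois-closed) equational theory. -/
structure SgVariety where
  th : Set SgId
  closed : eqTh th = th

theorem SgVariety.ext' {V W : SgVariety} (h : V.th = W.th) : V = W := by
  cases V; cases W; cases h; rfl

/-- The variety defined by a set of identities. -/
def varOf (E : Set SgId) : SgVariety :=
  ⟨eqTh E, eqTh_idem E⟩

/-- `V ≤ W` iff `V` is a subvariety of `W`, i.e. the theory of `W` is contained
in the theory of `V`. -/
instance : PartialOrder SgVariety where
  le V W := W.th ⊆ V.th
  le_refl V := Set.Subset.refl _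
  le_trans a b c h1 h2 := Set.Subset.trans h2 h1
  le_antisymm a b h1 h2 := SgVariety.ext' (Set.Subset.antisymm h2 h1)

/-- The lattice **SEM** of all semigroup varieties: join is intersection of
theories; meet is the variety defined by the union of the theories. -/
instance : Lattice SgVariety :=
  { (inferInstance : PartialOrder SgVariety) with
    sup := fun V W =>
      ⟨V.th ∩ W.th, by
        refine Set.Subset.antisymm (Set.subset_inter ?_ ?_) (subset_eqTh _)
        · exact (eqTh_mono Set.inter_subset_left).trans (le_of_eq V.closed)
        · exact (eqTh_mono Set.inter_subset_right).trans (le_of_eq W.closed)⟩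
    le_sup_left := fun V W => Set.inter_subset_left
    le_sup_right := fun V W => Set.inter_subset_right
    sup_le := fun V W U h1 h2 => Set.subset_inter h1 h2
    inf := fun V W => varOf (V.th ∪ W.th)
    inf_le_left := fun V W => Set.subset_union_left.trans (subset_eqTh _)
    inf_le_right := fun V W => Set.subset_union_right.trans (subset_eqTh _)
    le_inf := fun U V W h1 h2 =>
      (eqTh_mono (Set.union_subset h1 h2)).trans (le_of_eq U.closed) }

/-- The letters `x`, `y`, `z`. -/
def xw : Word := FreeSemigroup.of 0
def yw : Word := FreeSemigroup.of 1
def zw : Word := FreeSemigroup.of 2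

/-- The commutative law `xy = yx`. -/
def commId : SgId := (xw * yw, yw * xw)

/-- The lattice **Com**: commutative semigroup varieties. -/
abbrev ComVariety : Type := { V : SgVariety // commId ∈ V.th }

instance : Lattice ComVariety :=
  { (inferInstance : PartialOrder ComVariety) with
    sup := fun V W => ⟨V.1 ⊔ W.1, ⟨V.2, W.2⟩⟩
    le_sup_left := fun V W => @le_sup_left SgVariety _ V.1 W.1
    le_sup_right := fun V W => @le_sup_right SgVariety _ V.1 W.1
    sup_le := fun V W U h1 h2 => @sup_le SgVariety _ V.1 W.1 U.1 h1 h2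
    inf := fun V W => ⟨V.1 ⊓ W.1, subset_eqTh _ (Set.mem_union_left _ V.2)⟩
    inf_le_left := fun V W => @inf_le_left SgVariety _ V.1 W.1
    inf_le_right := fun V W => @inf_le_right SgVariety _ V.1 W.1
    le_inf := fun U V W h1 h2 => @le_inf SgVariety _ U.1 V.1 W.1 h1 h2 }

/-- The trivial variety `T`. -/
def trivialVar : SgVariety := varOf Set.univ

/-- The variety `COM` of all commutative semigroups. -/
def COMvar : SgVariety := varOf {commId}

/-- The variety `SL` of semilattices. -/
def SLvar : SgVariety := varOf {commId, (xw * xw, xw)}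

/-- `C_m = var{xᵐ = xᵐ⁺¹, xy = yx}` for `m ≥ 1`, and `C_0 = T`. -/
def Cvar : ℕ → SgVariety
  | 0 => trivialVar
  | m + 1 => varOf {commId, (spow xw m, spow xw (m + 1))}

def Tcom : ComVariety := ⟨trivialVar, subset_eqTh _ (Set.mem_univ _)⟩
def COMcom : ComVariety := ⟨COMvar, subset_eqTh _ rfl⟩
def SLcom : ComVariety := ⟨SLvar, subset_eqTh _ (Set.mem_insert _ _)⟩
def Ccom (m : ℕ) : ComVariety :=
  ⟨Cvar m, by
    cases m with
    | zero => exact subset_eqTh _ (Set.mem_univ _)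
    | succ m => exact subset_eqTh _ (Set.mem_insert _ _)⟩

/-- A semigroup (nonempty, with the given multiplication) is a group. -/
def IsGroupS (S : Type) [Semigroup S] : Prop :=
  ∃ e : S, (∀ a : S, e * a = a ∧ a * e = a) ∧ ∀ a : S, ∃ b : S, a * b = e ∧ b * a = e

/-- A nilsemigroup: there is a zero element and some power of every element is zero. -/
def IsNilS (S : Type) [Semigroup S] : Prop :=
  ∃ z : S, (∀ a : S, z * a = z ∧ a * z = z) ∧ ∀ a : S, ∃ n : ℕ, spow a n = z

/-- A group variety: all its (nonempty) members are groups. -/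
def IsGroupVariety (V : SgVariety) : Prop :=
  ∀ (S : Type) [Semigroup S], Nonempty S → Models S V.th → IsGroupS S

/-- A nil-variety: all its (nonempty) members are nilsemigroups. -/
def IsNilVariety (V : SgVariety) : Prop :=
  ∀ (S : Type) [Semigroup S], Nonempty S → Models S V.th → IsNilS S

/-- A combinatorial variety: all groups in it are singletons. -/
def IsCombinatorial (V : SgVariety) : Prop :=
  ∀ (S : Type) [Semigroup S], Models S V.th → IsGroupS S → Subsingleton S

/-- A periodic variety: satisfies `xⁿ = xⁿ⁺ᵏ` for some `n, k ≥ 1`. -/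
def IsPeriodic (V : SgVariety) : Prop :=
  ∃ n k : ℕ, (spow xw n, spow xw (n + k + 1)) ∈ V.th

/-- The letter `k` occurs in the word `w`. -/
def occursIn (k : ℕ) (w : Word) : Prop := k = w.head ∨ k ∈ w.tail

/-- `S` satisfies the identity `w = 0` (i.e. the system `wx = xw = w`, `x` fresh):
every value of `w` in `S` is a (two-sided) zero element. -/
def SatZeroS (S : Type) [Semigroup S] (w : Word) : Prop :=
  ∀ (σ : ℕ → S) (a : S),
    FreeSemigroup.lift σ w * a = FreeSemigroup.lift σ w ∧
      a * FreeSemigroup.lift σ w = FreeSemigroup.lift σ w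

/-- The variety `V` satisfies the identity `w = 0`. -/
def VSatZero (V : SgVariety) (w : Word) : Prop :=
  ∀ (S : Type) [Semigroup S], Models S V.th → SatZeroS S w

/-- The words `x²`, `x³`, `x²y`, `xy²`, `x²yz`. -/
def w_xx : Word := xw * xw
def w_xxx : Word := xw * xw * xw
def w_xxy : Word := xw * xw * yw
def w_xyy : Word := xw * yw * yw
def w_xxyz : Word := xw * xw * yw * zw

/-- The identity `x²y = xy²`. -/
def idQ : SgId := (w_xxy, w_xyy)

/-- The pair of identities expressing `w = 0`, with `k` a fresh letter. -/
def zeroPair (w : Word) (k : ℕ) : Set SgId :=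
  {(w * FreeSemigroup.of k, w), (FreeSemigroup.of k * w, w)}

/-- `xprodTo n = x₁x₂⋯xₙ` (for `n ≥ 1`), on the letters `0, …, n-1`. -/
def xprodTo : ℕ → Word
  | 0 => FreeSemigroup.of 0
  | 1 => FreeSemigroup.of 0
  | n + 2 => xprodTo (n + 1) * FreeSemigroup.of (n + 1)

/-- `I = var{x²y = xy², x²yz = 0, xy = yx}`. -/
def Ivar : SgVariety := varOf ({commId, idQ} ∪ zeroPair w_xxyz 3)

/-- `K = var{x²y = 0, xy = yx}`. -/
def Kvar : SgVariety := varOf ({commId} ∪ zeroPair w_xxy 2)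

/-- `L = var{x² = 0, xy = yx}`. -/
def Lvar : SgVariety := varOf ({commId} ∪ zeroPair w_xx 1)

/-- `I_n = var{x²yz = x₁⋯xₙ = 0, x²y = xy², xy = yx}`. -/
def Ivarn (n : ℕ) : SgVariety :=
  varOf ({commId, idQ} ∪ zeroPair w_xxyz 3 ∪ zeroPair (xprodTo n) n)

/-- `J = var{x²yz = x³ = 0, x²y = xy², xy = yx}`. -/
def Jvar : SgVariety := varOf ({commId, idQ} ∪ zeroPair w_xxyz 3 ∪ zeroPair w_xxx 1)

/-- `J_n = var{x²yz = x³ = x₁⋯xₙ = 0, x²y = xy², xy = yx}`. -/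
def Jvarn (n : ℕ) : SgVariety :=
  varOf ({commId, idQ} ∪ zeroPair w_xxyz 3 ∪ zeroPair w_xxx 1 ∪ zeroPair (xprodTo n) n)

/-- `K_n = var{x²y = x₁⋯xₙ = 0, xy = yx}`. -/
def Kvarn (n : ℕ) : SgVariety :=
  varOf ({commId} ∪ zeroPair w_xxy 2 ∪ zeroPair (xprodTo n) n)

/-- `L_n = var{x² = x₁⋯xₙ = 0, xy = yx}`. -/
def Lvarn (n : ℕ) : SgVariety :=
  varOf ({commId} ∪ zeroPair w_xx 1 ∪ zeroPair (xprodTo n) n)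

/-- Generators of `ZR(U)`: the commutative law together with all 0-reduced
identities (in the form of the corresponding identity pairs) holding in `U`. -/
def ZRgen (U : SgVariety) : Set SgId :=
  {commId} ∪ { e : SgId | ∃ (w : Word) (k : ℕ), ¬ occursIn k w ∧ VSatZero U w ∧
      (e = (w * FreeSemigroup.of k, w) ∨ e = (FreeSemigroup.of k * w, w)) }

/-- `ZR(U)`: the variety given by the commutative law and all 0-reduced
identities holding in `U`. -/
def ZRvar (U : SgVariety) : SgVariety := varOf (ZRgen U)

def Icom : ComVariety := ⟨Ivar, subset_eqTh _ (Set.mem_union_left _ (Set.mem_insert _ _))⟩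

def ZRcom (U : SgVariety) : ComVariety :=
  ⟨ZRvar U, subset_eqTh _ (Set.mem_union_left _ rfl)⟩

/-- All nilsemigroups in `V` are nilpotent of degree ≤ n, i.e. satisfy `x₁⋯xₙ = 0`. -/
def HasDegLe (V : SgVariety) (n : ℕ) : Prop :=
  ∀ (S : Type) [Semigroup S], Nonempty S → Models S V.th → IsNilS S → SatZeroS S (xprodTo n)

/-- `deg V = d` (with `d = ⊤` meaning infinite degree). -/
def DegIs (V : SgVariety) (d : ℕ∞) : Prop :=
  (∃ n : ℕ, 0 < n ∧ d = (n : ℕ∞) ∧ IsLeast {m : ℕ | 0 < m ∧ HasDegLe V m} n) ∨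
    (d = ⊤ ∧ ∀ n : ℕ, 0 < n → ¬ HasDegLe V n)

/-- Upper-modular element of a lattice. -/
def IsUpperModular {L : Type*} [Lattice L] (a : L) : Prop :=
  ∀ b c : L, b ≤ a → a ⊓ (b ⊔ c) = b ⊔ (a ⊓ c)

/-- Codistributive element of a lattice. -/
def IsCodistributive {L : Type*} [Lattice L] (a : L) : Prop :=
  ∀ b c : L, a ⊓ (b ⊔ c) = (a ⊓ b) ⊔ (a ⊓ c)

/-- Costandard element of a lattice. -/
def IsCostandard {L : Type*} [Lattice L] (a : L) : Prop :=
  ∀ b c : L, (a ⊓ b) ⊔ c = (a ⊔ c) ⊓ (b ⊔ c)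

/-- Modular element of a lattice. -/
def IsModularElt {L : Type*} [Lattice L] (a : L) : Prop :=
  ∀ b c : L, b ≤ c → (a ⊔ b) ⊓ c = (a ⊓ c) ⊔ b

/-- Neutral element of a lattice, via the median characterization
(equivalent to: every triple containing `a` generates a distributive
sublattice; Grätzer, "Lattice Theory: Foundation", Theorem 254). -/
def IsNeutralElt {L : Type*} [Lattice L] (a : L) : Prop :=
  ∀ b c : L, (a ⊓ b) ⊔ (b ⊓ c) ⊔ (c ⊓ a) = (a ⊔ b) ⊓ (b ⊔ c) ⊓ (c ⊔ a)

/-!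
Commutative words are identified with their contents, the multisets of their letters, and the
theory of `V` with the fully invariant congruence it induces on contents. Since `V ≠ COM`, some
identity of `V` has sides of different contents, and collapsing all letters onto `x` turns it
into `xᴺ = xᴺ⁺ᴷ`. Let `P` be the least period of the powers of `x` modulo `V`, and `m` the
largest `j` with `C_j ⊆ V`. The varieties `G = V ∧ [xᴷy = y]`, `C_m` and `V ∧ [xᴺ = 0]` lie
in `V`. Conversely, let `u = v` hold in all three. The cyclic group of order `P` lies in `G`, so
the letter counts of `u` and `v` agree modulo `P`; in `C_m` they agree when capped at `m`; and
in the Rees quotient of the relatively free semigroup by the ideal generated by `N`-th powers,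
`u = v` either already holds in `V` or both `u` and `v` are `V`-equal to words `sᴺr` with `s`
nonempty (`r` possibly empty). Such a word absorbs the rider `s^E` for `E` a multiple of `K`.
An identity of `V` failing in `C_{m+1}` yields `xᵐy^E = xᵐ⁺ᵈy^E`, so in the presence of a rider
the multiplicity of a letter occurring at least `m` times can be changed by multiples of `P`;
this moves `u` to `v` one letter at a time.
-/

open Multiset

theorem Multiset.sum_map_ite_eq_count {α M : Type*} [DecidableEq α] [AddCommMonoid M]
    (s : Multiset α) (a : α) (x y : M) :
    (s.map fun b => if b = a then x else y).sum = s.count a • x + (card s - s.count a) • y := by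
  induction s using Multiset.induction_on with
  | empty => simp
  | cons b s ih =>
    have hle := count_le_card a s
    by_cases hb : b = a
    · subst hb
      simp only [map_cons, if_pos, sum_cons, ih, count_cons_self, card_cons,
        Nat.add_sub_add_right, succ_nsmul']
      abel
    · rw [map_cons, if_neg hb, sum_cons, ih, count_cons_of_ne (Ne.symm hb), card_cons,
        show card s + 1 - count a s = card s - count a s + 1 by omega, succ_nsmul']
      abel

theorem Multiset.nsmul_bind {α β : Type*} (n : ℕ) (s : Multiset α) (f : α → Multiset β) :
    (n • s).bind f = n • s.bind f := by
  induction n with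
  | zero => simp
  | succ n ih => rw [succ_nsmul, add_bind, ih, succ_nsmul]

theorem Multiset.sum_count_nsmul_eq_of_subset {α : Type*} [DecidableEq α] {X : Multiset α}
    {D : Finset α} (hD : X.toFinset ⊆ D) : ∑ a ∈ D, X.count a • {a} = X := by
  rw [← Finset.sum_subset hD fun a _ ha => by rw [count_eq_zero.mpr (by simpa using ha),
    zero_nsmul], toFinset_sum_count_nsmul_eq]

theorem AddCon.add_rel_add_of_forall_count {α : Type*} [DecidableEq α]
    (c : AddCon (Multiset α)) {X Y Z : Multiset α}
    (h : ∀ a r, c (X.count a • {a} + (Z + r)) (Y.count a • {a} + (Z + r))) :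
    c (X + Z) (Y + Z) := by
  have key : ∀ (D : Finset α) (R : Multiset α),
      c (∑ a ∈ D, X.count a • {a} + (Z + R)) (∑ a ∈ D, Y.count a • {a} + (Z + R)) := by
    intro D
    induction D using Finset.induction_on with
    | empty => exact fun R => c.refl _
    | insert a D ha ih =>
      intro R
      rw [Finset.sum_insert ha, Finset.sum_insert ha]
      have h₁ := h a (∑ a ∈ D, X.count a • {a} + R)
      have h₂ := ih (Y.count a • {a} + R)
      abel_nf at h₁ h₂ ⊢
      exact c.trans h₁ h₂
  simpa only [sum_count_nsmul_eq_of_subset Finset.subset_union_left,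
    sum_count_nsmul_eq_of_subset Finset.subset_union_right, add_zero]
    using key (X.toFinset ∪ Y.toFinset) 0

theorem Equivalence.rel_of_modEq {α : Type*} {r : α → α → Prop} (hr : Equivalence r)
    {f : ℕ → α} {n₀ p : ℕ} (hf : ∀ n, n₀ ≤ n → r (f n) (f (n + p))) {a b : ℕ}
    (ha : n₀ ≤ a) (hb : n₀ ≤ b) (hab : a ≡ b [MOD p]) : r (f a) (f b) := by
  have climb : ∀ a t, n₀ ≤ a → r (f a) (f (a + p * t)) := by
    intro a t ha
    induction t with
    | zero => exact hr.refl _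
    | succ t ih => exact hr.trans ih (by rw [mul_add_one, ← add_assoc]; exact hf _ (by omega))
  rcases le_total a b with h | h
  · obtain ⟨t, ht⟩ := (Nat.modEq_iff_dvd' h).mp hab
    rw [show b = a + p * t by omega]
    exact climb a t ha
  · obtain ⟨t, ht⟩ := (Nat.modEq_iff_dvd' h).mp hab.symm
    rw [show a = b + p * t by omega]
    exact hr.symm (climb b t hb)

theorem spow_add {S : Type*} [Semigroup S] (a : S) (i j : ℕ) :
    spow a (i + j + 1) = spow a i * spow a j := by
  induction i with
  | zero => rw [zero_add]; rfl
  | succ i ih => rw [show i + 1 + j + 1 = i + j + 1 + 1 by omega, spow, ih, spow, mul_assoc]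

theorem spow_eq_pow {M : Type*} [Monoid M] (a : M) (n : ℕ) : spow a n = a ^ (n + 1) := by
  induction n with
  | zero => simp [spow]
  | succ n ih => rw [spow, ih, pow_succ' a (n + 1)]

namespace FreeSemigroup

variable {α S : Type*} [Semigroup S]

theorem apply_lift {S' : Type*} [Semigroup S'] (g : S →ₙ* S') (σ : α → S)
    (u : FreeSemigroup α) : g (lift σ u) = lift (g ∘ σ) u :=
  (DFunLike.congr_fun (lift_comp_of' (g.comp (lift σ))) u).symm

theorem lift_spow (σ : α → S) (u : FreeSemigroup α) (n : ℕ) :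
    lift σ (spow u n) = spow (lift σ u) n := by
  induction n with
  | zero => rfl
  | succ n ih => rw [spow, map_mul, ih, spow]

end FreeSemigroup

namespace Word

def content (u : Word) : Multiset ℕ := u.head ::ₘ u.tail

@[simp] theorem content_of (n : ℕ) : content (of n) = {n} := rfl

@[simp] theorem content_mul (u v : Word) : content (u * v) = content u + content v := by
  simp [content, head_mul, tail_mul]

theorem content_ne_zero (u : Word) : content u ≠ 0 := cons_ne_zero

theorem exists_content_eq {s : Multiset ℕ} (hs : s ≠ 0) : ∃ u : Word, content u = s := by
  obtain ⟨a, l, h⟩ := List.exists_cons_of_ne_nil (by simpa using hs : s.toList ≠ [])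
  exact ⟨⟨a, l⟩, by rw [content, cons_coe, ← h, coe_toList]⟩

theorem content_lift (τ : ℕ → Word) (u : Word) :
    content (lift τ u) = (content u).bind fun n => content (τ n) := by
  induction u using FreeSemigroup.recOnMul with
  | ih1 x => simp
  | ih2 x y _ hy => simp [hy]

@[simp] theorem content_spow (u : Word) (n : ℕ) : content (spow u n) = (n + 1) • content u := by
  induction n with
  | zero => simp [spow]
  | succ n ih => rw [spow, content_mul, ih, succ_nsmul' _ (n + 1)]

theorem lift_eq_prod_content {M : Type*} [CommMonoid M] (σ : ℕ → M) (u : Word) :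
    lift σ u = ((content u).map σ).prod := by
  induction u using FreeSemigroup.recOnMul with
  | ih1 x => simp
  | ih2 x y _ hy => simp [hy]

theorem lift_eq_of_content_eq {S : Type*} [CommSemigroup S] (σ : ℕ → S) {u v : Word}
    (h : content u = content v) : lift σ u = lift σ v := by
  apply WithOne.coe_injective
  simp only [← WithOne.coeMulHom_apply, apply_lift, lift_eq_prod_content, h]

end Word

open Word

namespace SgVariety

variable {V : SgVariety}

theorem mem_th_of_forall_models {e : SgId}
    (h : ∀ (S : Type) [Semigroup S], Models S V.th → SatS S e) : e ∈ V.th :=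
  V.closed ▸ h

theorem models_th {S : Type} [Semigroup S] {E : Set SgId} (hS : Models S E) :
    Models S (varOf E).th :=
  fun _ he => he S hS

def thCon (V : SgVariety) : Con Word where
  r u v := (u, v) ∈ V.th
  iseqv :=
    { refl := fun _ => mem_th_of_forall_models fun _ _ _ _ => rfl
      symm := fun h => mem_th_of_forall_models fun _ _ hS σ => (hS _ h σ).symm
      trans := fun h₁ h₂ => mem_th_of_forall_models fun _ _ hS σ =>
        (hS _ h₁ σ).trans (hS _ h₂ σ) }
  mul' := fun h₁ h₂ => mem_th_of_forall_models fun _ _ hS σ => by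
    simp only [map_mul]
    rw [hS _ h₁ σ, hS _ h₂ σ]

theorem th_lift (τ : ℕ → Word) {u v : Word} (h : (u, v) ∈ V.th) :
    (lift τ u, lift τ v) ∈ V.th :=
  mem_th_of_forall_models fun _ _ hS σ => by
    show lift σ (lift τ u) = lift σ (lift τ v)
    rw [apply_lift, apply_lift]
    exact hS _ h _

theorem mul_comm_of_models (hV : commId ∈ V.th) {S : Type} [Semigroup S]
    (hS : Models S V.th) (a b : S) : a * b = b * a := by
  simpa [commId, xw, yw] using hS _ hV fun n => if n = 0 then a else b

theorem th_of_content_eq (hV : commId ∈ V.th) {u v : Word} (h : content u = content v) :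
    (u, v) ∈ V.th :=
  mem_th_of_forall_models fun S _ hS σ =>
    letI : CommSemigroup S := { mul_comm := mul_comm_of_models hV hS }
    lift_eq_of_content_eq σ h

theorem isGroupVariety_of_mem {k : ℕ} (hc : commId ∈ V.th) (hk : (spow xw k * yw, yw) ∈ V.th) :
    IsGroupVariety V := by
  intro S _ ⟨a₀⟩ hS
  have hcomm := mul_comm_of_models hc hS
  have hid : ∀ a b : S, spow a k * b = b := fun a b => by
    simpa [xw, yw, lift_spow] using hS _ hk fun n => if n = 0 then a else b
  have he : ∀ a, spow a k = spow a₀ k := fun a => by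
    rw [← hid a₀ (spow a k), hcomm, hid]
  have hinv : ∀ a, a * spow a (k + k) = spow a₀ k := fun a => by
    rw [← spow, spow_add, hid, he]
  exact ⟨spow a₀ k, fun a => ⟨hid a₀ a, hcomm a _ ▸ hid a₀ a⟩,
    fun a => ⟨spow a (k + k), hinv a, hcomm a _ ▸ hinv a⟩⟩

theorem isNilVariety_of_mem {n : ℕ} (hz : zeroPair (spow xw n) 1 ⊆ V.th) : IsNilVariety V := by
  intro S _ ⟨a₀⟩ hS
  have hr : ∀ a b : S, spow a n * b = spow a n := fun a b => by
    simpa [xw, lift_spow] using hS _ (hz (Set.mem_insert _ _)) fun i => if i = 0 then a else b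
  have hl : ∀ a b : S, b * spow a n = spow a n := fun a b => by
    simpa [xw, lift_spow] using
      hS _ (hz (Set.mem_insert_of_mem _ rfl)) fun i => if i = 0 then a else b
  exact ⟨spow a₀ n, fun a => ⟨hr a₀ a, hl a₀ a⟩, fun a => ⟨n, by rw [← hr a (spow a₀ n), hl]⟩⟩

end SgVariety

theorem Con.rel_of_mem_eqTh (c : Con Word)
    (hc : ∀ (τ : ℕ → Word) {u v : Word}, c u v →
      c (FreeSemigroup.lift τ u) (FreeSemigroup.lift τ v)) {E : Set SgId}
    (hE : ∀ e ∈ E, c e.1 e.2) {e : SgId} (he : e ∈ eqTh E) : c e.1 e.2 := by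
  have hmodels : Models c.Quotient E := by
    intro e' he' σ
    choose τ hτ using fun n => Quot.exists_rep (σ n)
    have key : ∀ w, FreeSemigroup.lift σ w = c.mkMulHom (FreeSemigroup.lift τ w) := fun w => by
      rw [apply_lift]
      exact congrArg (FreeSemigroup.lift · w) (funext hτ).symm
    rw [key, key]
    exact c.eq.mpr (hc τ (hE e' he'))
  have := he _ hmodels (c.mkMulHom ∘ of)
  rw [lift_comp_of'] at this
  exact c.eq.mp this

namespace ComVariety

variable (V : ComVariety)

/-- The empty multiset is the content of no word; it is related only to itself. -/
def ContentRel (s t : Multiset ℕ) : Prop :=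
  s = t ∨ ∃ u v : Word, content u = s ∧ content v = t ∧ (u, v) ∈ V.1.th

variable {V}

theorem contentRel_content_iff {u v : Word} :
    V.ContentRel (content u) (content v) ↔ (u, v) ∈ V.1.th := by
  refine ⟨?_, fun h => Or.inr ⟨u, v, rfl, rfl, h⟩⟩
  rintro (h | ⟨u', v', hu, hv, h⟩)
  · exact SgVariety.th_of_content_eq V.2 h
  · have huu' : (u, u') ∈ V.1.th := SgVariety.th_of_content_eq V.2 hu.symm
    exact V.1.thCon.trans huu' (V.1.thCon.trans h (SgVariety.th_of_content_eq V.2 hv))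

theorem ContentRel.symm {s t : Multiset ℕ} (h : V.ContentRel s t) : V.ContentRel t s := by
  rcases h with rfl | ⟨u, v, rfl, rfl, h⟩
  exacts [Or.inl rfl, Or.inr ⟨v, u, rfl, rfl, V.1.thCon.symm h⟩]

theorem ContentRel.trans {s t r : Multiset ℕ} (h₁ : V.ContentRel s t) (h₂ : V.ContentRel t r) :
    V.ContentRel s r := by
  rcases h₁ with rfl | ⟨u, v, rfl, rfl, h₁⟩
  · exact h₂
  rcases h₂ with rfl | ⟨v', w, hv, rfl, h₂⟩
  · exact Or.inr ⟨u, v, rfl, rfl, h₁⟩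
  have hvv' : (v, v') ∈ V.1.th := SgVariety.th_of_content_eq V.2 hv.symm
  exact Or.inr ⟨u, w, rfl, rfl, V.1.thCon.trans h₁ (V.1.thCon.trans hvv' h₂)⟩

theorem ContentRel.add_right {s t : Multiset ℕ} (h : V.ContentRel s t) (r : Multiset ℕ) :
    V.ContentRel (s + r) (t + r) := by
  rcases h with rfl | ⟨u, v, rfl, rfl, h⟩
  · exact Or.inl rfl
  rcases eq_or_ne r 0 with rfl | hr
  · simpa only [add_zero] using contentRel_content_iff.mpr h
  obtain ⟨w, rfl⟩ := exists_content_eq hr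
  exact Or.inr ⟨u * w, v * w, content_mul u w, content_mul v w,
    V.1.thCon.mul h (V.1.thCon.refl w)⟩

variable (V) in
def contentCon : AddCon (Multiset ℕ) where
  r := V.ContentRel
  iseqv := ⟨fun _ => Or.inl rfl, ContentRel.symm, ContentRel.trans⟩
  add' {s t s' _} h h' := (h.add_right s').trans (by simpa only [add_comm] using h'.add_right t)

theorem contentCon_content_iff {u v : Word} :
    V.contentCon (content u) (content v) ↔ (u, v) ∈ V.1.th :=
  contentRel_content_iff

theorem contentCon_zero_iff {s : Multiset ℕ} : V.contentCon 0 s ↔ s = 0 := by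
  refine ⟨?_, fun h => h ▸ V.contentCon.refl 0⟩
  rintro (h | ⟨u, _, hu, _, _⟩)
  exacts [h.symm, absurd hu (content_ne_zero u)]

theorem contentCon_bind {s t : Multiset ℕ} (h : V.contentCon s t) {f : ℕ → Multiset ℕ}
    (hf : ∀ n, f n ≠ 0) : V.contentCon (s.bind f) (t.bind f) := by
  rcases h with rfl | ⟨u, v, rfl, rfl, h⟩
  · exact V.contentCon.refl _
  choose τ hτ using fun n => exists_content_eq (hf n)
  refine Or.inr ⟨lift τ u, lift τ v, ?_, ?_, V.1.th_lift τ h⟩ <;> simp [content_lift, hτ]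

theorem contentCon_nsmul_of_pow {a b : ℕ} (h : V.contentCon (a • {0}) (b • {0}))
    {s : Multiset ℕ} (hs : s ≠ 0) (r : Multiset ℕ) : V.contentCon (a • s + r) (b • s + r) := by
  have := contentCon_bind h (f := fun _ => s) fun _ => hs
  rw [nsmul_bind, nsmul_bind, singleton_bind] at this
  exact V.contentCon.add this (V.contentCon.refl r)

theorem contentCon_nsmul_of_modEq {A P : ℕ} (h : V.contentCon (A • {0}) ((A + P) • {0}))
    {a b : ℕ} (ha : A ≤ a) (hb : A ≤ b) (hab : a ≡ b [MOD P]) {s : Multiset ℕ} (hs : s ≠ 0)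
    (r : Multiset ℕ) : V.contentCon (a • s + r) (b • s + r) := by
  refine contentCon_nsmul_of_pow ?_ hs r
  refine Equivalence.rel_of_modEq (f := fun n => n • {0}) ⟨V.contentCon.refl, V.contentCon.symm,
    V.contentCon.trans⟩ (fun n hn => ?_) ha hb hab
  have := V.contentCon.add h (V.contentCon.refl ((n - A) • {0}))
  simpa only [← add_nsmul, show A + (n - A) = n by omega,
    show A + P + (n - A) = n + P by omega] using this

theorem exists_content_ne (hV : V ≠ COMcom) :
    ∃ u v : Word, (u, v) ∈ V.1.th ∧ content u ≠ content v := by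
  by_contra! h
  refine hV (Subtype.ext (SgVariety.ext' (Set.Subset.antisymm (fun e he => ?_) ?_)))
  · exact SgVariety.th_of_content_eq (V := COMvar) (subset_eqTh _ rfl) (h e.1 e.2 he)
  · exact (eqTh_mono (Set.singleton_subset_iff.mpr V.2)).trans V.1.closed.le

theorem exists_contentCon_pow (hV : V ≠ COMcom) :
    ∃ N K, 0 < N ∧ 0 < K ∧ V.contentCon (N • {0}) ((N + K) • {0}) := by
  obtain ⟨u, v, huv, hne⟩ := exists_content_ne hV
  obtain ⟨ℓ, hℓ⟩ : ∃ ℓ, (content u).count ℓ ≠ (content v).count ℓ := by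
    by_contra! h
    exact hne (Multiset.ext.mpr h)
  -- sending `ℓ` to `x` and every other letter to `xᴹ`, the exponents still differ modulo `M`
  set M := (content u).count ℓ + (content v).count ℓ + 1
  have key := contentCon_bind (contentCon_content_iff.mpr huv)
    (f := fun n => if n = ℓ then {0} else M • {0}) fun n => by split_ifs <;> simp [M]
  simp only [Multiset.bind, Multiset.join, sum_map_ite_eq_count, smul_smul, ← add_nsmul] at key
  set a := (content u).count ℓ + ((content u).card - (content u).count ℓ) * M
  set b := (content v).count ℓ + ((content v).card - (content v).count ℓ) * M
  have hab : a ≠ b := by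
    intro h
    have := congrArg (· % M) h
    simp only [a, b, Nat.add_mul_mod_self_right] at this
    rw [Nat.mod_eq_of_lt (by omega), Nat.mod_eq_of_lt (by omega)] at this
    exact hℓ this
  have pos : ∀ {x y : ℕ}, V.contentCon (x • {0}) (y • {0}) → x ≠ y → 0 < x := fun h hxy => by
    by_contra! hx
    simp_all [Nat.le_zero.mp hx, contentCon_zero_iff]
  rcases lt_or_gt_of_ne hab with h | h
  · exact ⟨a, b - a, pos key hab, by omega, by rwa [Nat.add_sub_cancel' h.le]⟩
  · exact ⟨b, a - b, pos (V.contentCon.symm key) hab.symm, by omega,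
      by rw [Nat.add_sub_cancel' h.le]; exact V.contentCon.symm key⟩

theorem exists_period {N K : ℕ} (hK : 0 < K) (h : V.contentCon (N • {0}) ((N + K) • {0})) :
    ∃ P A, 0 < P ∧ V.contentCon (A • {0}) ((A + P) • {0}) ∧
      ∀ a b, V.contentCon (a • {0}) (b • {0}) → a ≡ b [MOD P] := by
  classical
  let D : ℕ → Prop := fun δ => 0 < δ ∧ ∃ a, V.contentCon (a • {0}) ((a + δ) • {0})
  have hD : ∃ δ, D δ := ⟨K, hK, N, h⟩
  have sub : ∀ {δ δ'}, D δ → D δ' → δ < δ' → D (δ' - δ) := by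
    rintro δ δ' ⟨-, a, ha⟩ ⟨-, a', ha'⟩ hlt
    have h₁ := V.contentCon.add ha (V.contentCon.refl (a' • {0}))
    have h₂ := V.contentCon.add ha' (V.contentCon.refl (a • {0}))
    simp only [← add_nsmul] at h₁ h₂
    rw [show a + δ + a' = a + a' + δ by omega] at h₁
    rw [show a' + a = a + a' by omega, show a' + δ' + a = a + a' + δ + (δ' - δ) by omega] at h₂
    exact ⟨by omega, a + a' + δ, V.contentCon.trans (V.contentCon.symm h₁) h₂⟩
  have dvd : ∀ δ, D δ → Nat.find hD ∣ δ := by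
    intro δ
    induction δ using Nat.strong_induction_on with
    | _ δ ih =>
      intro hδ
      rcases (Nat.find_min' hD hδ).eq_or_lt with heq | hlt
      · rw [heq]
      · have hP := (Nat.find_spec hD).1
        have := ih (δ - Nat.find hD) (by omega) (sub (Nat.find_spec hD) hδ hlt)
        simpa [Nat.sub_add_cancel hlt.le] using Nat.dvd_add this (dvd_refl _)
  obtain ⟨hP, A, hA⟩ := Nat.find_spec hD
  refine ⟨_, A, hP, hA, fun a b hab => ?_⟩
  wlog hle : a ≤ b generalizing a b
  · exact (this b a (V.contentCon.symm hab) (by omega)).symm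
  rcases hle.eq_or_lt with rfl | hlt
  · rfl
  refine (Nat.modEq_iff_dvd' hle).mpr (dvd _ ⟨by omega, a, ?_⟩)
  rwa [Nat.add_sub_cancel' hle]

end ComVariety

/-- The free monogenic monoid of `C_j`. -/
def Cap (j : ℕ) : Type := {a : ℕ // a ≤ j}

instance (j : ℕ) : Semigroup (Cap j) where
  mul a b := ⟨min (a.1 + b.1) j, min_le_right _ _⟩
  mul_assoc a b c := Subtype.ext <|
    show min (min (a.1 + b.1) j + c.1) j = min (a.1 + min (b.1 + c.1) j) j by omega

theorem Cap.val_lift {j : ℕ} (σ : ℕ → Cap j) (u : Word) :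
    (lift σ u).1 = min ((content u).map fun n => (σ n).1).sum j := by
  induction u using FreeSemigroup.recOnMul with
  | ih1 x => simpa using (σ x).2
  | ih2 x y hx hy =>
    rw [map_mul]
    show min ((lift σ (of x)).1 + (lift σ y).1) j = _
    rw [hx, hy]
    simp only [content_mul, map_add, sum_add]
    omega

theorem Cap.models_Cvar (k : ℕ) : Models (Cap (k + 1)) (Cvar (k + 1)).th := by
  refine SgVariety.models_th (E := {commId, (spow xw k, spow xw (k + 1))}) ?_
  rintro e (rfl | rfl) σ <;> apply Subtype.ext <;> rw [Cap.val_lift, Cap.val_lift]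
  · simp [commId, xw, yw, add_comm]
  · have := (σ 0).2
    simp only [xw, content_spow, content_of, map_nsmul, sum_nsmul, map_singleton, sum_singleton,
      smul_eq_mul]
    rcases Nat.eq_zero_or_pos (σ 0).1 with h | h
    · simp [h]
    · rw [min_eq_right (by nlinarith), min_eq_right (by nlinarith)]

theorem Cvar_th_iff {j : ℕ} {u v : Word} :
    (u, v) ∈ (Cvar j).th ↔ ∀ ℓ, min ((content u).count ℓ) j = min ((content v).count ℓ) j := by
  constructor
  · intro h ℓ
    cases j with
    | zero => simp
    | succ k =>
      let σ : ℕ → Cap (k + 1) := fun n => ⟨if n = ℓ then 1 else 0, by split_ifs <;> omega⟩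
      have := congrArg Subtype.val (Cap.models_Cvar k _ h σ : lift σ u = lift σ v)
      rw [Cap.val_lift, Cap.val_lift] at this
      simpa [σ, sum_map_ite_eq_count] using this
  · intro h
    cases j with
    | zero => exact subset_eqTh _ (Set.mem_univ _)
    | succ k =>
      have hpow : (Ccom (k + 1)).contentCon ((k + 1) • {0}) ((k + 1 + 1) • {0}) := by
        have : (spow xw k, spow xw (k + 1)) ∈ (Ccom (k + 1)).1.th :=
          subset_eqTh _ (Set.mem_insert_of_mem _ rfl)
        simpa [xw] using ComVariety.contentCon_content_iff.mpr this
      refine ComVariety.contentCon_content_iff (V := Ccom (k + 1)).mp ?_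
      simpa using AddCon.add_rel_add_of_forall_count _ (Z := 0) fun ℓ r => by
        by_cases heq : (content u).count ℓ = (content v).count ℓ
        · rw [heq]; exact AddCon.refl _ _
        have := h ℓ
        exact ComVariety.contentCon_nsmul_of_modEq hpow (by omega) (by omega) Nat.modEq_one
          (singleton_ne_zero ℓ) _

/-- The identities of `C_m ∨ Ab_P`, on contents. -/
def CapModEq (m P : ℕ) (X Y : Multiset ℕ) : Prop :=
  ∀ ℓ, min (X.count ℓ) m = min (Y.count ℓ) m ∧ X.count ℓ ≡ Y.count ℓ [MOD P]

namespace CapModEq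

variable {m P : ℕ} {X Y W : Multiset ℕ}

theorem symm (h : CapModEq m P X Y) : CapModEq m P Y X :=
  fun ℓ => ⟨(h ℓ).1.symm, (h ℓ).2.symm⟩

theorem trans (h : CapModEq m P X Y) (h' : CapModEq m P Y W) : CapModEq m P X W :=
  fun ℓ => ⟨(h ℓ).1.trans (h' ℓ).1, (h ℓ).2.trans (h' ℓ).2⟩

theorem add_nsmul_right {E : ℕ} (hPE : P ∣ E) {S : Multiset ℕ}
    (hS : ∀ ℓ ∈ S, m ≤ X.count ℓ) : CapModEq m P X (X + E • S) := by
  intro ℓ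
  simp only [count_add, count_nsmul]
  refine ⟨?_, (Nat.modEq_zero_iff_dvd.mpr (dvd_mul_of_dvd_left hPE _)).add_left _ |>.symm⟩
  by_cases hℓ : ℓ ∈ S
  · have := hS ℓ hℓ
    omega
  · simp [count_eq_zero.mpr hℓ]

end CapModEq

namespace ComVariety

variable {V : ComVariety}

theorem min_count_eq_of_contentCon {j : ℕ} (hj : V.1.th ⊆ (Cvar j).th) {s t : Multiset ℕ}
    (h : V.contentCon s t) (ℓ : ℕ) : min (s.count ℓ) j = min (t.count ℓ) j := by
  rcases h with rfl | ⟨u, v, rfl, rfl, h⟩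
  exacts [rfl, Cvar_th_iff.mp (hj h) ℓ]

theorem exists_capIndex {N K : ℕ} (hK : 0 < K) (h : V.contentCon (N • {0}) ((N + K) • {0})) :
    ∃ m ≤ N, V.1.th ⊆ (Cvar m).th ∧
      ∃ s t ℓ, V.contentCon s t ∧ s.count ℓ = m ∧ m < t.count ℓ := by
  classical
  have hN₁ : ¬ V.1.th ⊆ (Cvar (N + 1)).th := fun hQ => by
    have := min_count_eq_of_contentCon hQ h 0
    rw [count_nsmul, count_nsmul, count_singleton_self] at this
    omega
  have hN : ∃ j, ¬ V.1.th ⊆ (Cvar (j + 1)).th := ⟨N, hN₁⟩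
  set m := Nat.find hN
  have hm : V.1.th ⊆ (Cvar m).th := by
    rcases hm : m with _ | j
    · exact fun e _ => subset_eqTh _ (Set.mem_univ e)
    · exact not_not.mp (Nat.find_min hN (by omega))
  refine ⟨m, Nat.find_min' hN hN₁, hm, ?_⟩
  obtain ⟨⟨u, v⟩, huv, hn⟩ := Set.not_subset.mp (Nat.find_spec hN)
  obtain ⟨ℓ, hℓ⟩ : ∃ ℓ, min ((content u).count ℓ) (m + 1) ≠ min ((content v).count ℓ) (m + 1) := by
    by_contra! h
    exact hn (Cvar_th_iff.mpr h)
  have hcap := Cvar_th_iff.mp (hm huv) ℓ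
  have huv' := contentCon_content_iff.mpr huv
  rcases Nat.lt_or_gt_of_ne (a := (content u).count ℓ) (b := (content v).count ℓ) (by omega) with
    hlt | hlt
  · exact ⟨_, _, ℓ, huv', by omega, by omega⟩
  · exact ⟨_, _, ℓ, V.contentCon.symm huv', by omega, by omega⟩

/-- The rider identity `xᵐ y^E = xᵐ⁺ᵈ y^E` (with `E • w` for `y^E`), obtained from an identity of
`V` failing in `C_{m+1}` by substituting `x` for the letter it separates and `y^E` for the others.
-/
theorem exists_rider {m A P E : ℕ} {s t : Multiset ℕ} {ℓ₀ : ℕ} (hst : V.contentCon s t)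
    (hs : s.count ℓ₀ = m) (ht : m < t.count ℓ₀) (hA : V.contentCon (A • {0}) ((A + P) • {0}))
    (hE : 0 < E) (hAE : A ≤ E) (hPE : P ∣ E) :
    ∃ d, 0 < d ∧ ∀ ℓ w, w ≠ 0 → V.contentCon (m • {ℓ} + E • w) ((m + d) • {ℓ} + E • w) := by
  refine ⟨t.count ℓ₀ - m, by omega, fun ℓ w hw => ?_⟩
  have key := contentCon_bind hst (f := fun n => if n = ℓ₀ then {ℓ} else E • w)
    fun n => by split_ifs <;> simp [hw, hE.ne']
  simp only [Multiset.bind, Multiset.join, sum_map_ite_eq_count, hs, smul_smul] at key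
  have absorb : ∀ k x : ℕ, V.contentCon (x • {ℓ} + ((k * E) • w + E • w)) (x • {ℓ} + E • w) := by
    intro k x
    have hmod : k * E + E ≡ E [MOD P] := by
      simpa using (Nat.modEq_zero_iff_dvd.mpr (dvd_mul_of_dvd_right hPE k)).add_right E
    have := contentCon_nsmul_of_modEq hA (by omega) hAE hmod hw (x • {ℓ})
    rwa [add_nsmul, add_comm, add_comm (E • w)] at this
  have key' := V.contentCon.add key (V.contentCon.refl (E • w))
  rw [add_assoc, add_assoc] at key'
  rw [Nat.add_sub_cancel' ht.le]
  exact (V.contentCon.symm (absorb _ _)).trans (key'.trans (absorb _ _))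

theorem contentCon_rider {m d A P : ℕ} {Z : Multiset ℕ} (hd : 0 < d)
    (hZ : ∀ ℓ, V.contentCon (m • {ℓ} + Z) ((m + d) • {ℓ} + Z))
    (hA : V.contentCon (A • {0}) ((A + P) • {0})) {a b : ℕ} (hab : min a m = min b m)
    (hmod : a ≡ b [MOD P]) (ℓ : ℕ) (r : Multiset ℕ) :
    V.contentCon (a • {ℓ} + (Z + r)) (b • {ℓ} + (Z + r)) := by
  rcases eq_or_ne a b with rfl | hne
  · exact V.contentCon.refl _
  have climb : ∀ n, m ≤ n → V.contentCon (n • {ℓ} + (Z + r)) ((n + d) • {ℓ} + (Z + r)) := by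
    intro n hn
    have := V.contentCon.add (hZ ℓ) (V.contentCon.refl ((n - m) • {ℓ} + r))
    have e : ∀ x, x • {ℓ} + Z + ((n - m) • {ℓ} + r) = (x + (n - m)) • {ℓ} + (Z + r) := by
      intro x
      rw [add_nsmul]
      abel
    rwa [e, e, Nat.add_sub_cancel' hn, show m + d + (n - m) = n + d by omega] at this
  -- climb by `d * A` to reach the range `≥ A` where exponents only matter modulo `P`
  have lift : ∀ n, m ≤ n → V.contentCon (n • {ℓ} + (Z + r)) ((n + d * A) • {ℓ} + (Z + r)) :=
    fun n hn => Equivalence.rel_of_modEq (f := fun n => n • {ℓ} + (Z + r))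
      ⟨V.contentCon.refl, V.contentCon.symm, V.contentCon.trans⟩ climb hn (by omega)
      (Nat.add_mul_mod_self_left n d A).symm
  have hA' : A ≤ d * A := Nat.le_mul_of_pos_left A hd
  have mid := contentCon_nsmul_of_modEq hA (a := a + d * A) (b := b + d * A) (by omega) (by omega)
    (hmod.add_right _) (singleton_ne_zero ℓ) (Z + r)
  exact (lift a (by omega)).trans (mid.trans (V.contentCon.symm (lift b (by omega))))

theorem contentCon_add_of_capModEq {m d A P : ℕ} {Z : Multiset ℕ} (hd : 0 < d)
    (hZ : ∀ ℓ, V.contentCon (m • {ℓ} + Z) ((m + d) • {ℓ} + Z))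
    (hA : V.contentCon (A • {0}) ((A + P) • {0})) {X Y : Multiset ℕ} (h : CapModEq m P X Y) :
    V.contentCon (X + Z) (Y + Z) :=
  AddCon.add_rel_add_of_forall_count _ fun ℓ r => contentCon_rider hd hZ hA (h ℓ).1 (h ℓ).2 ℓ r

variable {N : ℕ}

variable (V N) in
def nilIdeal : Set (Multiset ℕ) := {s | ∃ S R, S ≠ 0 ∧ V.contentCon s (N • S + R)}

theorem mem_nilIdeal_of_contentCon {s t : Multiset ℕ} (h : V.contentCon s t)
    (ht : t ∈ V.nilIdeal N) : s ∈ V.nilIdeal N :=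
  let ⟨S, R, hS, ht⟩ := ht
  ⟨S, R, hS, V.contentCon.trans h ht⟩

theorem add_mem_nilIdeal {s : Multiset ℕ} (hs : s ∈ V.nilIdeal N) (r : Multiset ℕ) :
    s + r ∈ V.nilIdeal N :=
  let ⟨S, R, hS, hs⟩ := hs
  ⟨S, R + r, hS, by simpa only [add_assoc] using V.contentCon.add hs (V.contentCon.refl r)⟩

theorem bind_mem_nilIdeal {s : Multiset ℕ} (hs : s ∈ V.nilIdeal N) {f : ℕ → Multiset ℕ}
    (hf : ∀ n, f n ≠ 0) : s.bind f ∈ V.nilIdeal N := by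
  obtain ⟨S, R, hS, hs⟩ := hs
  obtain ⟨a, ha⟩ := exists_mem_of_ne_zero hS
  obtain ⟨S', rfl⟩ := exists_cons_of_mem ha
  refine ⟨(a ::ₘ S').bind f, R.bind f, by simp [hf a], ?_⟩
  simpa [add_bind, nsmul_bind] using contentCon_bind hs hf

variable (V N) in
/-- The Rees congruence of the ideal `nilIdeal`, pulled back to words. -/
def nilCon : Con Word where
  r u v := (u, v) ∈ V.1.th ∨ (content u ∈ V.nilIdeal N ∧ content v ∈ V.nilIdeal N)
  iseqv :=
    { refl := fun u => Or.inl (V.1.thCon.refl u)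
      symm := fun h => h.imp V.1.thCon.symm And.symm
      trans := by
        rintro u v w (h₁ | ⟨hu, hv⟩) (h₂ | ⟨hv', hw⟩)
        · exact Or.inl (V.1.thCon.trans h₁ h₂)
        · exact Or.inr ⟨mem_nilIdeal_of_contentCon (contentCon_content_iff.mpr h₁) hv', hw⟩
        · refine Or.inr ⟨hu, mem_nilIdeal_of_contentCon ?_ hv⟩
          exact contentCon_content_iff.mpr (V.1.thCon.symm h₂)
        · exact Or.inr ⟨hu, hw⟩ }
  mul' := by
    rintro u v w x (h₁ | ⟨hu, hv⟩) h₂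
    · rcases h₂ with h₂ | ⟨hw, hx⟩
      · exact Or.inl (V.1.thCon.mul h₁ h₂)
      · refine Or.inr ⟨?_, ?_⟩ <;> rw [content_mul, add_comm] <;> exact add_mem_nilIdeal ‹_› _
    · exact Or.inr ⟨by simpa using add_mem_nilIdeal hu _, by simpa using add_mem_nilIdeal hv _⟩

theorem mem_th_or_mem_nilIdeal (hN : 0 < N) {u v : Word}
    (h : (u, v) ∈ eqTh (V.1.th ∪ zeroPair (spow xw (N - 1)) 1)) :
    (u, v) ∈ V.1.th ∨ (content u ∈ V.nilIdeal N ∧ content v ∈ V.nilIdeal N) := by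
  refine Con.rel_of_mem_eqTh (V.nilCon N) (fun τ u v huv => ?_) ?_ h
  · rcases huv with huv | ⟨hu, hv⟩
    · exact Or.inl (V.1.th_lift τ huv)
    · refine Or.inr ⟨?_, ?_⟩ <;> rw [content_lift] <;>
        exact bind_mem_nilIdeal ‹_› fun n => content_ne_zero _
  have hpow : content (spow xw (N - 1)) = N • {0} := by simp [xw, Nat.sub_add_cancel hN]
  have hmem : N • {0} ∈ V.nilIdeal N :=
    ⟨{0}, 0, singleton_ne_zero 0, by simpa using V.contentCon.refl _⟩
  rintro e (he | he | he)
  · exact Or.inl he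
  all_goals
    subst he
    refine Or.inr ⟨?_, hpow ▸ hmem⟩
    simp only [content_mul, hpow]
  · exact add_mem_nilIdeal hmem _
  · exact add_comm (N • {0}) (content (of 1)) ▸ add_mem_nilIdeal hmem _

theorem contentCon_add_nsmul_of_contentCon {K E : ℕ}
    (hNK : V.contentCon (N • {0}) ((N + K) • {0})) (hKE : K ∣ E) {X S R : Multiset ℕ}
    (hS : S ≠ 0) (hX : V.contentCon X (N • S + R)) : V.contentCon X (X + E • S) := by
  have hmod : N ≡ N + E [MOD K] := by
    simpa using (Nat.modEq_zero_iff_dvd.mpr hKE).symm.add_left N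
  have := contentCon_nsmul_of_modEq hNK le_rfl (Nat.le_add_right N E) hmod hS R
  rw [add_nsmul, add_right_comm] at this
  exact hX.trans (this.trans (V.contentCon.add (V.contentCon.symm hX) (V.contentCon.refl _)))

theorem contentCon_of_mem_nilIdeal {K P m E : ℕ}
    (hNK : V.contentCon (N • {0}) ((N + K) • {0})) (hKE : K ∣ E) (hPE : P ∣ E) (hmN : m ≤ N)
    (hm : V.1.th ⊆ (Cvar m).th)
    (hrider : ∀ w, w ≠ 0 → ∀ X Y, CapModEq m P X Y → V.contentCon (X + E • w) (Y + E • w))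
    {X Y : Multiset ℕ} (hX : X ∈ V.nilIdeal N) (hY : Y ∈ V.nilIdeal N)
    (hXY : CapModEq m P X Y) : V.contentCon X Y := by
  obtain ⟨S₁, R₁, hS₁, hX⟩ := hX
  obtain ⟨S₂, R₂, hS₂, hY⟩ := hY
  have big : ∀ {Z S R : Multiset ℕ}, V.contentCon Z (N • S + R) → ∀ ℓ ∈ S, m ≤ Z.count ℓ := by
    intro Z S R hZ ℓ hℓ
    have hcap := min_count_eq_of_contentCon hm hZ ℓ
    have : N ≤ N * S.count ℓ := Nat.le_mul_of_pos_right N (count_pos.mpr hℓ)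
    simp only [count_add, count_nsmul] at hcap
    omega
  have big₁ : ∀ ℓ ∈ S₁, m ≤ Y.count ℓ := fun ℓ hℓ => by
    have := (hXY ℓ).1
    have := big hX ℓ hℓ
    omega
  have h₁ := hrider S₁ hS₁ _ _ (hXY.trans (CapModEq.add_nsmul_right hPE (big hY)))
  have h₂ := hrider S₂ hS₂ _ _ (CapModEq.add_nsmul_right hPE big₁).symm
  rw [add_right_comm] at h₁
  exact (contentCon_add_nsmul_of_contentCon hNK hKE hS₁ hX).trans (h₁.trans
    (h₂.trans (V.contentCon.symm (contentCon_add_nsmul_of_contentCon hNK hKE hS₂ hY))))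

variable {P : ℕ}

theorem models_zmod (hP : 0 < P)
    (hmod : ∀ a b, V.contentCon (a • {0}) (b • {0}) → a ≡ b [MOD P]) :
    Models (Multiplicative (ZMod P)) V.1.th := by
  have : NeZero P := ⟨hP.ne'⟩
  rintro ⟨u, v⟩ huv σ
  -- substitute `x ^ w n` for the letter `n`, where `w n` is a positive representative of `σ n`
  let w : ℕ → ℕ := fun n => (σ n).toAdd.val + P
  have hbind : ∀ s : Multiset ℕ, (s.bind fun n => w n • {0}) = (s.map w).sum • {0} := fun s => by
    rw [Multiset.bind, Multiset.join, sum_smul, map_map]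
    rfl
  have key := contentCon_bind (contentCon_content_iff.mpr huv) (f := fun n => w n • {0})
    fun n => by simp [w, hP.ne']
  rw [hbind, hbind] at key
  have hcast := (ZMod.natCast_eq_natCast_iff _ _ _).mpr (hmod _ _ key)
  simp only [Nat.cast_multiset_sum, map_map, Function.comp_def, w, Nat.cast_add,
    ZMod.natCast_self, add_zero, ZMod.natCast_zmod_val] at hcast
  apply Multiplicative.toAdd.injective
  simpa only [lift_eq_prod_content, toAdd_multiset_sum, map_map, Function.comp_def] using hcast

theorem modEq_count_of_mem_eqTh {K : ℕ} (hP : 0 < P)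
    (hmod : ∀ a b, V.contentCon (a • {0}) (b • {0}) → a ≡ b [MOD P]) (hK : 0 < K) (hPK : P ∣ K)
    {u v : Word} (h : (u, v) ∈ eqTh (V.1.th ∪ {(spow xw (K - 1) * yw, yw)})) (ℓ : ℕ) :
    (content u).count ℓ ≡ (content v).count ℓ [MOD P] := by
  have hmodels : Models (Multiplicative (ZMod P)) (V.1.th ∪ {(spow xw (K - 1) * yw, yw)}) := by
    rintro e (he | rfl)
    · exact models_zmod hP hmod e he
    intro σ
    have hKP : (K : ZMod P) = 0 := (ZMod.natCast_eq_zero_iff K P).mpr hPK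
    apply Multiplicative.toAdd.injective
    simp [xw, yw, lift_spow, spow_eq_pow, Nat.sub_add_cancel hK, hKP]
  have := h _ hmodels fun n => Multiplicative.ofAdd (if n = ℓ then (1 : ZMod P) else 0)
  simp only [lift_eq_prod_content] at this
  have := congrArg Multiplicative.toAdd this
  simp only [toAdd_multiset_sum, map_map, Function.comp_def, toAdd_ofAdd, sum_map_ite_eq_count,
    nsmul_eq_mul, mul_one, mul_zero, add_zero] at this
  exact (ZMod.natCast_eq_natCast_iff _ _ _).mp this

end ComVariety

/-- Every commutative semigroup variety `V ≠ COM`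
decomposes as `V = G ∨ C_m ∨ N` with `G` an Abelian (i.e. commutative)
periodic group variety, `m ≥ 0`, and `N` a nil-variety. -/
theorem decomposition_of_commutative_variety (V : ComVariety) (hV : V ≠ COMcom) :
    ∃ (G N : ComVariety) (m : ℕ), IsGroupVariety G.1 ∧ IsPeriodic G.1 ∧
      IsNilVariety N.1 ∧ V = G ⊔ Ccom m ⊔ N := by
  obtain ⟨N, K, hN, hK, hNK⟩ := V.exists_contentCon_pow hV
  obtain ⟨P, A, hP, hA, hmod⟩ := V.exists_period hK hNK
  obtain ⟨m, hmN, hm, s, t, ℓ, hst, hs, ht⟩ := V.exists_capIndex hK hNK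
  have hPK : P ∣ K :=
    Nat.modEq_zero_iff_dvd.mp (Nat.ModEq.add_left_cancel' N (by simpa using hmod _ _ hNK)).symm
  obtain ⟨d, hd, hrider⟩ := V.exists_rider (E := (A + 1) * K) hst hs ht hA (by positivity)
    (by nlinarith) (dvd_mul_of_dvd_right hPK _)
  let G : ComVariety := ⟨varOf (V.1.th ∪ {(spow xw (K - 1) * yw, yw)}), subset_eqTh _ (.inl V.2)⟩
  let Nil : ComVariety := ⟨varOf (V.1.th ∪ zeroPair (spow xw (N - 1)) 1), subset_eqTh _ (.inl V.2)⟩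
  have hperiod : (spow xw (N - 1), spow xw (N - 1 + (K - 1) + 1)) ∈ V.1.th := by
    rw [← ComVariety.contentCon_content_iff]
    simpa [xw, show N - 1 + (K - 1) + 1 + 1 = N + K by omega, Nat.sub_add_cancel hN] using hNK
  refine ⟨G, Nil, m, SgVariety.isGroupVariety_of_mem G.2 (subset_eqTh _ (.inr rfl)),
    ⟨_, _, subset_eqTh _ (.inl hperiod)⟩,
    SgVariety.isNilVariety_of_mem fun e he => subset_eqTh _ (.inr he),
    Subtype.ext (SgVariety.ext' (Set.Subset.antisymm
      (fun e he => ⟨⟨subset_eqTh _ (.inl he), hm he⟩, subset_eqTh _ (.inl he)⟩) ?_))⟩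
  rintro ⟨u, v⟩ ⟨⟨hG, hC⟩, hNil⟩
  rcases V.mem_th_or_mem_nilIdeal hN hNil with h | ⟨hu, hv⟩
  · exact h
  refine ComVariety.contentCon_content_iff.mp (V.contentCon_of_mem_nilIdeal hNK
    (dvd_mul_left K _) (dvd_mul_of_dvd_right hPK _) hmN hm
    (fun w hw X Y h => V.contentCon_add_of_capModEq hd (hrider · w hw) hA h) hu hv fun ℓ => ?_)
  exact ⟨Cvar_th_iff.mp hC ℓ, V.modEq_count_of_mem_eqTh hP hmod hK hPK hG ℓ⟩
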